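/- For every positive integer m and every real t, the derivative identity (t^m A_{m+2}(t))' = m t^{m−1} A_m(t) holds. -/

import Mathlib

/-- The normalized Bessel-type function `A_m`. -/
noncomputable def A (m : ℕ) (t : ℝ) : ℝ :=
  ∑' ℓ : ℕ, (-1 : ℝ) ^ ℓ * Real.Gamma ((m : ℝ) / 2)
    / (ℓ.factorial * Real.Gamma ((ℓ : ℝ) + (m : ℝ) / 2)) * (t / 2) ^ (2 * ℓ)

/-!
Both sides are power series in `t` with infinite radius of convergence. Differentiating
`t ^ m * A (m + 2) t` termwise, the functional equation `Γ (x + 1) = x Γ x` turns the coefficient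
`(2ℓ + m) Γ (m/2 + 1) / Γ (ℓ + m/2 + 1)` into `m Γ (m/2) / Γ (ℓ + m/2)`. Termwise differentiation
is justified by the bound `Γ (ℓ + a) ≥ ℓ! Γ a` for `a ≥ 1`, which makes the coefficients of
`A (m + 2)` at most `1 / ℓ!` in absolute value.
-/

open Real Nat

theorem Real.factorial_mul_Gamma_le_Gamma_nat_add {a : ℝ} (ha : 1 ≤ a) (n : ℕ) :
    n ! * Gamma a ≤ Gamma (n + a) := by
  induction n with
  | zero => simp
  | succ n ih =>
    have hna : 0 < (n : ℝ) + a := by positivity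
    calc ((n + 1)! : ℝ) * Gamma a = (n + 1) * (n ! * Gamma a) := by
          push_cast [factorial_succ]; ring
      _ ≤ (n + a) * Gamma (n + a) := by gcongr
      _ = Gamma ((n + 1 : ℕ) + a) := by
        rw [← Gamma_add_one hna.ne']; push_cast; ring_nf

noncomputable def besselCoeff (a : ℝ) (n : ℕ) : ℝ :=
  (-1) ^ n * Gamma a / (n ! * Gamma (n + a) * 4 ^ n)

theorem A_eq_tsum (m : ℕ) (t : ℝ) : A m t = ∑' n, besselCoeff (m / 2) n * t ^ (2 * n) := by
  refine tsum_congr fun n => ?_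
  rw [besselCoeff, div_pow, pow_mul, pow_mul]
  field_simp
  norm_num

theorem abs_besselCoeff_le {a : ℝ} (ha : 1 ≤ a) (n : ℕ) : |besselCoeff a n| ≤ 1 / n ! := by
  have hΓa : 0 < Gamma a := Gamma_pos_of_pos (by linarith)
  have hΓna : 0 < Gamma (n + a) := Gamma_pos_of_pos (by positivity)
  rw [besselCoeff, abs_div, abs_mul, abs_pow, abs_neg, abs_one, one_pow, one_mul,
    abs_of_pos hΓa, abs_of_pos (by positivity), div_le_div_iff₀ (by positivity) (by positivity)]
  have h4 : (1 : ℝ) ≤ n ! * 4 ^ n :=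
    one_le_mul_of_one_le_of_one_le (by exact_mod_cast factorial_pos n) (one_le_pow₀ (by norm_num))
  calc Gamma a * n ! ≤ Gamma (n + a) := by
        linarith [factorial_mul_Gamma_le_Gamma_nat_add ha n]
    _ ≤ Gamma (n + a) * (n ! * 4 ^ n) := le_mul_of_one_le_right hΓna.le h4
    _ = 1 * (n ! * Gamma (n + a) * 4 ^ n) := by ring

theorem besselCoeff_add_one_mul {a : ℝ} (ha : 0 < a) (n : ℕ) :
    (n + a) * besselCoeff (a + 1) n = a * besselCoeff a n := by
  have hna : 0 < (n : ℝ) + a := by positivity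
  have hΓ : Gamma (n + (a + 1)) = (n + a) * Gamma (n + a) := by
    rw [← add_assoc, Gamma_add_one hna.ne']
  have := (Gamma_pos_of_pos hna).ne'
  rw [besselCoeff, besselCoeff, Gamma_add_one ha.ne', hΓ]
  field_simp

theorem hasDerivAt_tsum_mul_pow_two_mul_add {c : ℕ → ℝ} {C : ℝ}
    (hc : ∀ n, |c n| ≤ C / n !) {d : ℕ} (hd : d ≠ 0) (t : ℝ) :
    HasDerivAt (fun s => ∑' n, c n * s ^ (2 * n + d))
      (∑' n, c n * ((2 * n + d : ℕ) * t ^ (2 * n + d - 1))) t := by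
  set R := |t| + 1
  have hbound : ∀ n, ∀ y ∈ Metric.ball (0 : ℝ) R,
      ‖c n * ((2 * n + d : ℕ) * y ^ (2 * n + d - 1))‖ ≤
        C * (d + 2) * R ^ (d - 1) * ((2 * R ^ 2) ^ n / n !) := by
    intro n y hy
    have hyR : |y| ≤ R := by
      rw [mem_ball_zero_iff, Real.norm_eq_abs] at hy
      exact hy.le
    have h2n : (2 * n + d : ℕ) ≤ ((d : ℝ) + 2) * 2 ^ n := by
      have : (n : ℝ) ≤ 2 ^ n := by exact_mod_cast Nat.lt_two_pow_self.le
      have : (1 : ℝ) ≤ 2 ^ n := one_le_pow₀ (by norm_num)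
      push_cast; nlinarith
    have hC : 0 ≤ C / n ! := (abs_nonneg _).trans (hc n)
    calc ‖c n * ((2 * n + d : ℕ) * y ^ (2 * n + d - 1))‖
        = |c n| * ((2 * n + d : ℕ) * |y| ^ (2 * n + (d - 1))) := by
          rw [Real.norm_eq_abs, abs_mul, abs_mul, abs_pow, Nat.abs_cast,
            Nat.add_sub_assoc (by omega)]
      _ ≤ C / n ! * ((d + 2) * 2 ^ n * R ^ (2 * n + (d - 1))) := by gcongr; exact hc n
      _ = C * (d + 2) * R ^ (d - 1) * ((2 * R ^ 2) ^ n / n !) := by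
          rw [pow_add, pow_mul, mul_pow]; ring
  have hsum : Summable fun n => C * (d + 2) * R ^ (d - 1) * ((2 * R ^ 2) ^ n / n !) :=
    (summable_pow_div_factorial _).mul_left _
  have hzero : Summable fun n => c n * (0 : ℝ) ^ (2 * n + d) :=
    summable_zero.congr fun n => by rw [zero_pow (by omega), mul_zero]
  exact hasDerivAt_tsum_of_isPreconnected (g := fun n s => c n * s ^ (2 * n + d)) hsum
    Metric.isOpen_ball (convex_ball 0 R).isPreconnected
    (fun n y _ => (hasDerivAt_pow _ y).const_mul (c n)) hbound
    (Metric.mem_ball_self (by positivity)) hzero (by simp [R])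

theorem A_deriv_identity (m : ℕ) (hm : 0 < m) (t : ℝ) :
    deriv (fun s : ℝ => s ^ m * A (m + 2) s) t = m * t ^ (m - 1) * A m t := by
  have hA : (fun s : ℝ => s ^ m * A (m + 2) s) =
      fun s => ∑' n, besselCoeff (m / 2 + 1) n * s ^ (2 * n + m) := by
    ext s
    rw [A_eq_tsum, ← tsum_mul_left]
    push_cast
    ring_nf
  have hm2 : (0 : ℝ) < m / 2 := by positivity
  rw [hA, (hasDerivAt_tsum_mul_pow_two_mul_add (abs_besselCoeff_le (by linarith)) hm.ne' t).deriv,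
    A_eq_tsum, ← tsum_mul_left]
  refine tsum_congr fun n => ?_
  rw [Nat.add_sub_assoc hm, pow_add]
  push_cast
  linear_combination 2 * t ^ (2 * n) * t ^ (m - 1) * besselCoeff_add_one_mul hm2 n
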